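/- Let T, n ≥ 1, let R be a real symmetric T×T matrix and c, C > 0 constants with c‖x‖² ≤ xᵀRx ≤ C‖x‖² for all x ∈ ℝ^T. For each i ∈ {1,…,n} let D_i be a diagonal T×T matrix all of whose diagonal entries are at least d, where d > 0, and let v_i ∈ ℝ^T. Set M = (1/n)∑_{i=1}^n D_i R D_i + (1/n)∑_{i=1}^n v_i v_iᵀ. Then M is invertible, the matrix M⁻¹ R M⁻¹ is symmetric positive semidefinite and satisfies xᵀM⁻¹RM⁻¹x ≤ (C/(c²d⁴))·‖x‖² for all x ∈ ℝ^T, and moreover M·(M⁻²R)·M⁻¹ = M⁻¹RM⁻¹, so M⁻²R and M⁻¹RM⁻¹ have the same characteristic polynomial; in particular every eigenvalue of M⁻²R is real, nonnegative, and at most C/(c²d⁴). -/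

import Mathlib

/-!
As quadratic forms, each `Dᵢ R Dᵢ` dominates `c d²` times the identity and the rank-one terms
`vᵢ vᵢᵀ` are positive semidefinite, so `M ≥ c d² I`. Hence `M` is invertible and, by
Cauchy–Schwarz, `‖M⁻¹x‖ ≤ ‖x‖ / (c d²)`, which gives
`xᵀ M⁻¹ R M⁻¹ x = (M⁻¹x)ᵀ R (M⁻¹x) ≤ C ‖x‖² / (c² d⁴)`.
Since `M⁻²R = M⁻¹ (M⁻¹R)` and `M⁻¹RM⁻¹ = (M⁻¹R) M⁻¹`, the two matrices share their characteristic
polynomial, whose roots are the real eigenvalues of the symmetric matrix `M⁻¹RM⁻¹`; the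
quadratic-form bounds confine these to `[0, C / (c² d⁴)]`.
-/

open Matrix Polynomial

namespace Matrix

variable {ι : Type*} [Fintype ι]

lemma dotProduct_self_nonneg {α : Type*} [Ring α] [LinearOrder α] [IsStrictOrderedRing α]
    (x : ι → α) : 0 ≤ x ⬝ᵥ x :=
  Finset.sum_nonneg fun i _ => mul_self_nonneg (x i)

lemma dotProduct_self_pos {α : Type*} [Ring α] [LinearOrder α] [IsStrictOrderedRing α]
    {x : ι → α} (hx : x ≠ 0) : 0 < x ⬝ᵥ x :=
  (dotProduct_self_nonneg x).lt_of_ne' (dotProduct_self_eq_zero.not.2 hx)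

lemma dotProduct_transpose_mul_mul_mulVec {α : Type*} [CommSemiring α] (A R : Matrix ι ι α)
    (x : ι → α) : x ⬝ᵥ ((Aᵀ * R * A) *ᵥ x) = (A *ᵥ x) ⬝ᵥ (R *ᵥ (A *ᵥ x)) := by
  rw [← mulVec_mulVec, ← mulVec_mulVec, dotProduct_mulVec, vecMul_transpose]

lemma sq_mul_dotProduct_self_le_of_isDiag {D : Matrix ι ι ℝ} (hD : D.IsDiag) {d : ℝ}
    (hd : 0 ≤ d) (hdD : ∀ t, d ≤ D t t) (x : ι → ℝ) :
    d ^ 2 * (x ⬝ᵥ x) ≤ (D *ᵥ x) ⬝ᵥ (D *ᵥ x) := by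
  classical
  rw [← hD.diagonal_diag]
  simp only [dotProduct, mulVec_diagonal, Finset.mul_sum, diag]
  refine Finset.sum_le_sum fun t _ => ?_
  calc d ^ 2 * (x t * x t) = (d * d) * (x t * x t) := by ring
    _ ≤ (D t t * D t t) * (x t * x t) :=
        mul_le_mul_of_nonneg_right (mul_self_le_mul_self hd (hdD t)) (mul_self_nonneg _)
    _ = D t t * x t * (D t t * x t) := by ring

lemma mul_sq_mul_dotProduct_self_le_of_isDiag {D R : Matrix ι ι ℝ} (hD : D.IsDiag) {c d : ℝ}
    (hc : 0 ≤ c) (hd : 0 ≤ d) (hdD : ∀ t, d ≤ D t t) (hR : ∀ x, c * (x ⬝ᵥ x) ≤ x ⬝ᵥ (R *ᵥ x))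
    (x : ι → ℝ) : c * d ^ 2 * (x ⬝ᵥ x) ≤ x ⬝ᵥ ((D * R * D) *ᵥ x) := by
  have hDRD := dotProduct_transpose_mul_mul_mulVec D R x
  rw [hD.isSymm.eq] at hDRD
  calc c * d ^ 2 * (x ⬝ᵥ x) = c * (d ^ 2 * (x ⬝ᵥ x)) := mul_assoc ..
    _ ≤ c * ((D *ᵥ x) ⬝ᵥ (D *ᵥ x)) := by
        gcongr; exact sq_mul_dotProduct_self_le_of_isDiag hD hd hdD x
    _ ≤ (D *ᵥ x) ⬝ᵥ (R *ᵥ (D *ᵥ x)) := hR _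
    _ = x ⬝ᵥ ((D * R * D) *ᵥ x) := hDRD.symm

lemma PosSemidef.mul_mul_of_isSymm {R A : Matrix ι ι ℝ} (hR : R.PosSemidef) (hA : A.IsSymm) :
    (A * R * A).PosSemidef := by
  simpa [conjTranspose_eq_transpose_of_trivial, hA.eq] using hR.conjTranspose_mul_mul_same A

lemma posSemidef_sum_vecMulVec_self {κ : Type*} [Fintype κ] (v : κ → ι → ℝ) :
    (∑ i, vecMulVec (v i) (v i)).PosSemidef :=
  posSemidef_sum _ fun i _ => by simpa using posSemidef_vecMulVec_self_star (v i)

lemma le_dotProduct_smul_sum_mulVec {n : ℕ} (hn : 0 < n) {A : Fin n → Matrix ι ι ℝ} {a : ℝ}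
    (hA : ∀ i x, a * (x ⬝ᵥ x) ≤ x ⬝ᵥ (A i *ᵥ x)) (x : ι → ℝ) :
    a * (x ⬝ᵥ x) ≤ x ⬝ᵥ (((1 / (n : ℝ)) • ∑ i, A i) *ᵥ x) := by
  rw [smul_mulVec, dotProduct_smul, sum_mulVec, dotProduct_sum, smul_eq_mul, one_div_mul_eq_div,
    le_div_iff₀ (by exact_mod_cast hn)]
  calc a * (x ⬝ᵥ x) * n = ∑ _i : Fin n, a * (x ⬝ᵥ x) := by simp [mul_comm]
    _ ≤ ∑ i, x ⬝ᵥ (A i *ᵥ x) := Finset.sum_le_sum fun i _ => hA i x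

lemma mem_Icc_of_mulVec_eq_smul {S : Matrix ι ι ℝ} {a b μ : ℝ} {v : ι → ℝ} (hv : v ≠ 0)
    (hSv : S *ᵥ v = μ • v) (hlo : ∀ x, a * (x ⬝ᵥ x) ≤ x ⬝ᵥ (S *ᵥ x))
    (hhi : ∀ x, x ⬝ᵥ (S *ᵥ x) ≤ b * (x ⬝ᵥ x)) : μ ∈ Set.Icc a b := by
  have hvv := dotProduct_self_pos hv
  have hform : v ⬝ᵥ (S *ᵥ v) = μ * (v ⬝ᵥ v) := by rw [hSv, dotProduct_smul, smul_eq_mul]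
  exact ⟨le_of_mul_le_mul_right (hform ▸ hlo v) hvv, le_of_mul_le_mul_right (hform ▸ hhi v) hvv⟩

variable [DecidableEq ι]

lemma isUnit_of_mul_dotProduct_self_le {M : Matrix ι ι ℝ} {a : ℝ} (ha : 0 < a)
    (hM : ∀ x, a * (x ⬝ᵥ x) ≤ x ⬝ᵥ (M *ᵥ x)) : IsUnit M := by
  rw [isUnit_iff_isUnit_det, isUnit_iff_ne_zero]
  intro hdet
  obtain ⟨x, hx, hMx⟩ := exists_mulVec_eq_zero_iff.2 hdet
  have := hM x
  rw [hMx, dotProduct_zero] at this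
  exact (mul_pos ha (dotProduct_self_pos hx)).not_ge this

/-- Cauchy–Schwarz: `a ‖y‖² ≤ ⟪y, M y⟫ ≤ ‖y‖ ‖M y‖` with `y = M⁻¹ x`. -/
lemma sq_mul_dotProduct_inv_mulVec_self_le {M : Matrix ι ι ℝ} {a : ℝ} (ha : 0 < a)
    (hM : ∀ x, a * (x ⬝ᵥ x) ≤ x ⬝ᵥ (M *ᵥ x)) (x : ι → ℝ) :
    a ^ 2 * ((M⁻¹ *ᵥ x) ⬝ᵥ (M⁻¹ *ᵥ x)) ≤ x ⬝ᵥ x := by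
  set y := M⁻¹ *ᵥ x
  have hMy : M *ᵥ y = x := by
    rw [mulVec_mulVec, mul_nonsing_inv _ ((isUnit_iff_isUnit_det M).1
      (isUnit_of_mul_dotProduct_self_le ha hM)), one_mulVec]
  have hlow : a * (y ⬝ᵥ y) ≤ y ⬝ᵥ x := hMy ▸ hM y
  have hcs : (y ⬝ᵥ x) ^ 2 ≤ (y ⬝ᵥ y) * (x ⬝ᵥ x) := by
    simpa [dotProduct, sq] using Finset.sum_mul_sq_le_sq_mul_sq Finset.univ y x
  rcases (dotProduct_self_nonneg y).eq_or_lt with hy0 | hypos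
  · rw [← hy0, mul_zero]
    exact dotProduct_self_nonneg x
  · have hsq := (pow_le_pow_left₀ (by positivity) hlow 2).trans hcs
    exact le_of_mul_le_mul_right (by linarith) hypos

lemma dotProduct_inv_mul_mul_inv_mulVec_le {M R : Matrix ι ι ℝ} (hMsymm : M.IsSymm) {a K : ℝ}
    (ha : 0 < a) (hM : ∀ x, a * (x ⬝ᵥ x) ≤ x ⬝ᵥ (M *ᵥ x)) (hK : 0 ≤ K)
    (hR : ∀ x, x ⬝ᵥ (R *ᵥ x) ≤ K * (x ⬝ᵥ x)) (x : ι → ℝ) :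
    x ⬝ᵥ ((M⁻¹ * R * M⁻¹) *ᵥ x) ≤ K / a ^ 2 * (x ⬝ᵥ x) := by
  have hform := dotProduct_transpose_mul_mul_mulVec M⁻¹ R x
  rw [hMsymm.inv.eq] at hform
  rw [hform]
  calc (M⁻¹ *ᵥ x) ⬝ᵥ (R *ᵥ (M⁻¹ *ᵥ x)) ≤ K * ((M⁻¹ *ᵥ x) ⬝ᵥ (M⁻¹ *ᵥ x)) := hR _
    _ ≤ K * ((x ⬝ᵥ x) / a ^ 2) := by
        gcongr
        rw [le_div_iff₀ (by positivity), mul_comm]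
        exact sq_mul_dotProduct_inv_mulVec_self_le ha hM x
    _ = K / a ^ 2 * (x ⬝ᵥ x) := by ring

lemma IsHermitian.exists_eq_eigenvalues_of_isRoot_charpoly_map {S : Matrix ι ι ℝ}
    (hS : S.IsHermitian) {z : ℂ} (hz : (S.charpoly.map (algebraMap ℝ ℂ)).IsRoot z) :
    ∃ i, z = hS.eigenvalues i := by
  rw [hS.charpoly_eq, Polynomial.map_prod] at hz
  simpa [Polynomial.eval_prod, Finset.prod_eq_zero_iff, sub_eq_zero] using hz

lemma IsHermitian.eigenvalues_mem_Icc {S : Matrix ι ι ℝ} (hS : S.IsHermitian) {a b : ℝ}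
    (hlo : ∀ x, a * (x ⬝ᵥ x) ≤ x ⬝ᵥ (S *ᵥ x)) (hhi : ∀ x, x ⬝ᵥ (S *ᵥ x) ≤ b * (x ⬝ᵥ x))
    (i : ι) : hS.eigenvalues i ∈ Set.Icc a b :=
  mem_Icc_of_mulVec_eq_smul
    ((WithLp.ofLp_eq_zero 2).ne.2 <| hS.eigenvectorBasis.orthonormal.ne_zero i)
    (hS.mulVec_eigenvectorBasis i) hlo hhi

end Matrix

theorem stmt1_general (T n : ℕ) (hn : 1 ≤ n)
    (R : Matrix (Fin T) (Fin T) ℝ) (hRsym : R.IsSymm)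
    (c C : ℝ) (hc : 0 < c) (hC : 0 < C)
    (hRlb : ∀ x : Fin T → ℝ, c * (x ⬝ᵥ x) ≤ x ⬝ᵥ (R *ᵥ x))
    (hRub : ∀ x : Fin T → ℝ, x ⬝ᵥ (R *ᵥ x) ≤ C * (x ⬝ᵥ x))
    (d : ℝ) (hd : 0 < d)
    (D : Fin n → Matrix (Fin T) (Fin T) ℝ)
    (hDdiag : ∀ i, (D i).IsDiag)
    (hDge : ∀ i t, d ≤ D i t t)
    (v : Fin n → (Fin T → ℝ))
    (M : Matrix (Fin T) (Fin T) ℝ)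
    (hM : M = (1 / (n : ℝ)) • ∑ i, D i * R * D i
        + (1 / (n : ℝ)) • ∑ i, vecMulVec (v i) (v i)) :
    IsUnit M ∧
    (M⁻¹ * R * M⁻¹).IsSymm ∧
    (M⁻¹ * R * M⁻¹).PosSemidef ∧
    (∀ x : Fin T → ℝ, x ⬝ᵥ ((M⁻¹ * R * M⁻¹) *ᵥ x) ≤ (C / (c ^ 2 * d ^ 4)) * (x ⬝ᵥ x)) ∧
    M * (M⁻¹ * M⁻¹ * R) * M⁻¹ = M⁻¹ * R * M⁻¹ ∧
    (M⁻¹ * M⁻¹ * R).charpoly = (M⁻¹ * R * M⁻¹).charpoly ∧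
    (∀ z : ℂ, ((M⁻¹ * M⁻¹ * R).charpoly.map (algebraMap ℝ ℂ)).IsRoot z →
      z.im = 0 ∧ 0 ≤ z.re ∧ z.re ≤ C / (c ^ 2 * d ^ 4)) := by
  have hR : R.PosSemidef := .of_dotProduct_mulVec_nonneg (isHermitian_iff_isSymm.2 hRsym)
    fun x => by simpa using (mul_nonneg hc.le (dotProduct_self_nonneg x)).trans (hRlb x)
  have hDRD : ((1 / (n : ℝ)) • ∑ i, D i * R * D i).PosSemidef :=
    (posSemidef_sum _ fun i _ => hR.mul_mul_of_isSymm (hDdiag i).isSymm).smul (by positivity)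
  have hVV : ((1 / (n : ℝ)) • ∑ i, vecMulVec (v i) (v i)).PosSemidef :=
    (posSemidef_sum_vecMulVec_self v).smul (by positivity)
  have hMsymm : M.IsSymm := isHermitian_iff_isSymm.1 (hM ▸ (hDRD.add hVV).isHermitian)
  have hMlb : ∀ x, c * d ^ 2 * (x ⬝ᵥ x) ≤ x ⬝ᵥ (M *ᵥ x) := fun x => by
    have hmean := le_dotProduct_smul_sum_mulVec hn (fun i => mul_sq_mul_dotProduct_self_le_of_isDiag
      (hDdiag i) hc.le hd.le (hDge i) hRlb) x
    have hVVx : 0 ≤ x ⬝ᵥ (((1 / (n : ℝ)) • ∑ i, vecMulVec (v i) (v i)) *ᵥ x) := by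
      simpa using hVV.dotProduct_mulVec_nonneg x
    rw [hM, add_mulVec, dotProduct_add]
    linarith
  have hcd : 0 < c * d ^ 2 := by positivity
  have hMunit : IsUnit M := isUnit_of_mul_dotProduct_self_le hcd hMlb
  have hS : (M⁻¹ * R * M⁻¹).PosSemidef := hR.mul_mul_of_isSymm hMsymm.inv
  have hSub : ∀ x, x ⬝ᵥ ((M⁻¹ * R * M⁻¹) *ᵥ x) ≤ (C / (c ^ 2 * d ^ 4)) * (x ⬝ᵥ x) := by
    convert dotProduct_inv_mul_mul_inv_mulVec_le hMsymm hcd hMlb hC.le hRub using 4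
    ring
  have hcharpoly : (M⁻¹ * M⁻¹ * R).charpoly = (M⁻¹ * R * M⁻¹).charpoly := by
    rw [mul_assoc, charpoly_mul_comm]
  refine ⟨hMunit, isHermitian_iff_isSymm.1 hS.isHermitian, hS, hSub, ?_, hcharpoly, ?_⟩
  · rw [← mul_assoc, ← mul_assoc, mul_nonsing_inv _ ((isUnit_iff_isUnit_det M).1 hMunit),
      one_mul, mul_assoc]
  · intro z hz
    obtain ⟨i, rfl⟩ :=
      hS.isHermitian.exists_eq_eigenvalues_of_isRoot_charpoly_map (hcharpoly ▸ hz)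
    have hmem := hS.isHermitian.eigenvalues_mem_Icc (a := 0)
      (fun x => by simpa using hS.dotProduct_mulVec_nonneg x) hSub i
    exact ⟨Complex.ofReal_im _, hmem.1, hmem.2⟩

/-- With `c‖x‖² ≤ xᵀRx ≤ C‖x‖²`, diagonal `D i` with entries `≥ d > 0`, and
`M = (1/n)∑ Dᵢ R Dᵢ + (1/n)∑ vᵢ vᵢᵀ`, the matrix `M` is invertible, `M⁻¹RM⁻¹` is symmetric
positive semidefinite with `xᵀM⁻¹RM⁻¹x ≤ (C/(c²d⁴))‖x‖²`, `M(M⁻²R)M⁻¹ = M⁻¹RM⁻¹` so that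
`M⁻²R` and `M⁻¹RM⁻¹` have the same characteristic polynomial, and every eigenvalue of `M⁻²R`
is real, nonnegative and at most `C/(c²d⁴)`. -/
theorem stmt1 (T n : ℕ) (hT : 1 ≤ T) (hn : 1 ≤ n)
    (R : Matrix (Fin T) (Fin T) ℝ) (hRsym : R.IsSymm)
    (c C : ℝ) (hc : 0 < c) (hC : 0 < C)
    (hRlb : ∀ x : Fin T → ℝ, c * (x ⬝ᵥ x) ≤ x ⬝ᵥ (R *ᵥ x))
    (hRub : ∀ x : Fin T → ℝ, x ⬝ᵥ (R *ᵥ x) ≤ C * (x ⬝ᵥ x))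
    (d : ℝ) (hd : 0 < d)
    (D : Fin n → Matrix (Fin T) (Fin T) ℝ)
    (hDdiag : ∀ i, (D i).IsDiag)
    (hDge : ∀ i t, d ≤ D i t t)
    (v : Fin n → (Fin T → ℝ))
    (M : Matrix (Fin T) (Fin T) ℝ)
    (hM : M = (1 / (n : ℝ)) • ∑ i, D i * R * D i
        + (1 / (n : ℝ)) • ∑ i, vecMulVec (v i) (v i)) :
    IsUnit M ∧
    (M⁻¹ * R * M⁻¹).IsSymm ∧
    (M⁻¹ * R * M⁻¹).PosSemidef ∧
    (∀ x : Fin T → ℝ, x ⬝ᵥ ((M⁻¹ * R * M⁻¹) *ᵥ x) ≤ (C / (c ^ 2 * d ^ 4)) * (x ⬝ᵥ x)) ∧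
    M * (M⁻¹ * M⁻¹ * R) * M⁻¹ = M⁻¹ * R * M⁻¹ ∧
    (M⁻¹ * M⁻¹ * R).charpoly = (M⁻¹ * R * M⁻¹).charpoly ∧
    (∀ z : ℂ, ((M⁻¹ * M⁻¹ * R).charpoly.map (algebraMap ℝ ℂ)).IsRoot z →
      z.im = 0 ∧ 0 ≤ z.re ∧ z.re ≤ C / (c ^ 2 * d ^ 4)) :=
  stmt1_general T n hn R hRsym c C hc hC hRlb hRub d hd D hDdiag hDge v M hM
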